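/- arXiv:1011.6610 — 4 statements merged into one kernel-verified Lean document; each statement's English description precedes it below -/
import Mathlib

section
/- Let $l_0 \geq l_1 \geq \cdots \geq l_s$ be positive integers and let $\mathcal{F}$ be the set of functions $f\colon\{1,\dots,l_0\}\to\{0,1,\dots,s\}$ such that for every $1 \leq i \leq s$, $\#\{r : f(r) \geq i\} \leq l_i$. Then $\#\mathcal{F} \leq \prod_{i=1}^s (e\, l_{i-1}/l_i)^{l_i}$. -/
/-!
Truncating `f` at level `s` (replacing it by `min f s`) maps the admissible functions with
values `≤ s + 1` into those with values `≤ s`, and a fibre is determined by the set where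
`f = s + 1`: a subset of size `≤ l (s + 1)` of `{r | g r = s}`, which has size `≤ l s`.
So the count grows by a factor `∑_{j ≤ l (s+1)} C(l s, j) ≤ (e l s / l (s+1)) ^ l (s+1)` per level,
the last bound by comparing with `(1 + x) ^ (l s)` at `x = l (s+1) / l s`.
-/

open Finset

theorem sum_range_choose_le_exp_mul_div_pow {m k : ℕ} (hk : 0 < k) (hkm : k ≤ m) :
    ∑ j ∈ range (k + 1), (m.choose j : ℝ) ≤ (Real.exp 1 * m / k) ^ k := by
  have hm : (0 : ℝ) < m := by exact_mod_cast hk.trans_le hkm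
  set x : ℝ := k / m
  have hx0 : 0 < x := by positivity
  have hx1 : x ≤ 1 := div_le_one_of_le₀ (by exact_mod_cast hkm) hm.le
  have key : (∑ j ∈ range (k + 1), (m.choose j : ℝ)) * x ^ k ≤ Real.exp 1 ^ k :=
    calc (∑ j ∈ range (k + 1), (m.choose j : ℝ)) * x ^ k
        ≤ ∑ j ∈ range (k + 1), (m.choose j : ℝ) * x ^ j := by
          rw [sum_mul]
          refine sum_le_sum fun j hj ↦ mul_le_mul_of_nonneg_left ?_ (by positivity)
          exact pow_le_pow_of_le_one hx0.le hx1 (Nat.lt_succ_iff.1 (mem_range.1 hj))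
      _ ≤ ∑ j ∈ range (m + 1), (m.choose j : ℝ) * x ^ j :=
          sum_le_sum_of_subset_of_nonneg (range_subset_range.2 (by omega))
            fun _ _ _ ↦ by positivity
      _ = (x + 1) ^ m := by simp [add_pow, mul_comm]
      _ ≤ Real.exp x ^ m := by gcongr; exact Real.add_one_le_exp x
      _ = Real.exp 1 ^ k := by
          rw [← Real.exp_nat_mul, ← Real.exp_nat_mul]
          congr 1
          simp only [x]
          field_simp
  rwa [show Real.exp 1 * m / k = Real.exp 1 / x by simp only [x]; field_simp, div_pow,
    le_div_iff₀ (by positivity)]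

theorem card_filter_powerset_card_le {α : Type*} (S : Finset α) (k : ℕ) :
    #{A ∈ S.powerset | #A ≤ k} ≤ ∑ j ∈ range (k + 1), (#S).choose j := by
  classical
  have h : {A ∈ S.powerset | #A ≤ k} = (range (k + 1)).biUnion (powersetCard · S) := by
    ext A
    simp only [mem_filter, mem_powerset, mem_biUnion, mem_range, mem_powersetCard]
    exact ⟨fun ⟨hAS, hA⟩ ↦ ⟨#A, by omega, hAS, rfl⟩, fun ⟨j, hj, hAS, hA⟩ ↦ ⟨hAS, by omega⟩⟩
  rw [h]
  exact card_biUnion_le.trans_eq (by simp only [card_powersetCard])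

section LevelCounting

variable {α : Type*} [Fintype α] [DecidableEq α] {S : ℕ}

-- The condition at `i = 0` is `card α ≤ l 0`.
def levelBoundedFuns (l : ℕ → ℕ) (s : ℕ) : Finset (α → Fin (S + 1)) :=
  {f | (∀ r, (f r : ℕ) ≤ s) ∧ ∀ i ≤ s, #{r | i ≤ (f r : ℕ)} ≤ l i}

variable {l : ℕ → ℕ} {s : ℕ}

theorem truncate_mem_levelBoundedFuns {f : α → Fin (S + 1)} (t : Fin (S + 1))
    (hf : f ∈ levelBoundedFuns l (t + 1 : ℕ)) : (fun r ↦ min (f r) t) ∈ levelBoundedFuns l t := by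
  simp only [levelBoundedFuns, mem_filter, mem_univ, true_and, Fin.coe_min] at hf ⊢
  refine ⟨fun r ↦ min_le_right _ _, fun i hi ↦ ?_⟩
  have : ({r | i ≤ min (f r : ℕ) t} : Finset α) = ({r | i ≤ (f r : ℕ)} : Finset α) :=
    filter_congr fun r _ ↦ by omega
  exact this ▸ hf.2 i (by omega)

theorem card_truncate_fiber_le (t : Fin (S + 1)) {g : α → Fin (S + 1)}
    (hg : g ∈ levelBoundedFuns l t) :
    #{f ∈ levelBoundedFuns l (t + 1 : ℕ) | (fun r ↦ min (f r) t) = g} ≤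
      ∑ j ∈ range (l (t + 1) + 1), (l t).choose j := by
  simp only [levelBoundedFuns, mem_filter, mem_univ, true_and] at hg
  have hinj : Set.InjOn (fun f : α → Fin (S + 1) ↦ ({r | (t + 1 : ℕ) ≤ f r} : Finset α))
      ↑({f ∈ levelBoundedFuns l (t + 1 : ℕ) | (fun r ↦ min (f r) t) = g} : Finset _) := by
    intro f₁ hf₁ f₂ hf₂ h
    simp only [coe_filter, levelBoundedFuns, mem_filter, mem_univ, true_and,
      Set.mem_ofPred_eq] at hf₁ hf₂
    funext r
    have htop := Finset.ext_iff.1 h r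
    have hmin := congrFun (hf₁.2.trans hf₂.2.symm) r
    simp only [mem_filter, mem_univ, true_and] at htop
    rw [← Fin.val_inj, Fin.coe_min, Fin.coe_min] at hmin
    have hle₁ := hf₁.1.1 r
    have hle₂ := hf₂.1.1 r
    exact Fin.ext (by omega)
  calc _ ≤ #{A ∈ ({r | (t : ℕ) ≤ g r} : Finset α).powerset | #A ≤ l (t + 1)} := by
        refine card_le_card_of_injOn _ (fun f hf ↦ ?_) hinj
        simp only [coe_filter, levelBoundedFuns, mem_filter, mem_univ, true_and,
          Set.mem_ofPred_eq] at hf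
        simp only [coe_filter, mem_powerset, Set.mem_ofPred_eq]
        refine ⟨fun r ↦ ?_, hf.1.2 _ le_rfl⟩
        simp only [mem_filter, mem_univ, true_and, ← hf.2, Fin.coe_min]
        omega
    _ ≤ ∑ j ∈ range (l (t + 1) + 1), (#({r | (t : ℕ) ≤ g r} : Finset α)).choose j :=
        card_filter_powerset_card_le _ _
    _ ≤ _ := sum_le_sum fun j _ ↦ Nat.choose_le_choose j (hg.2 t le_rfl)

theorem card_levelBoundedFuns_succ_le (t : Fin (S + 1)) :
    #(levelBoundedFuns (α := α) (S := S) l (t + 1 : ℕ)) ≤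
      #(levelBoundedFuns (α := α) (S := S) l t) * ∑ j ∈ range (l (t + 1) + 1), (l t).choose j :=
  (card_le_mul_card_image_of_maps_to (fun _ ↦ truncate_mem_levelBoundedFuns t) _
    fun _ ↦ card_truncate_fiber_le t).trans_eq (mul_comm _ _)

theorem card_levelBoundedFuns_le (hs : s ≤ S) :
    #(levelBoundedFuns (α := α) (S := S) l s) ≤
      ∏ i ∈ Icc 1 s, ∑ j ∈ range (l i + 1), (l (i - 1)).choose j := by
  induction s with
  | zero =>
    refine card_le_one.2 fun f hf g hg ↦ funext fun r ↦ Fin.ext ?_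
    simp only [levelBoundedFuns, mem_filter, mem_univ, true_and] at hf hg
    have := hf.1 r
    have := hg.1 r
    omega
  | succ s ih =>
    rw [prod_Icc_succ_top (by omega)]
    exact (card_levelBoundedFuns_succ_le (⟨s, by omega⟩ : Fin (S + 1))).trans
      (Nat.mul_le_mul_right _ (ih (by omega)))

end LevelCounting

theorem stmt0_general (s : ℕ) (l : ℕ → ℕ) (hpos : ∀ i ≤ s, 0 < l i)
    (hmono : ∀ i j, i ≤ j → j ≤ s → l j ≤ l i) :
    ((Finset.univ.filter (fun f : Fin (l 0) → Fin (s + 1) =>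
        ∀ i : ℕ, 1 ≤ i → i ≤ s →
          ((Finset.univ.filter (fun r : Fin (l 0) => i ≤ (f r : ℕ))).card ≤ l i))).card : ℝ)
      ≤ ∏ i ∈ Finset.Icc 1 s, (Real.exp 1 * l (i - 1) / l i) ^ (l i) := by
  have hsub : Finset.univ.filter (fun f : Fin (l 0) → Fin (s + 1) =>
        ∀ i : ℕ, 1 ≤ i → i ≤ s →
          ((Finset.univ.filter (fun r : Fin (l 0) => i ≤ (f r : ℕ))).card ≤ l i)) ⊆
      levelBoundedFuns l s := by
    intro f hf
    simp only [levelBoundedFuns, mem_filter, mem_univ, true_and] at hf ⊢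
    refine ⟨fun r ↦ Nat.lt_succ_iff.1 (f r).2, fun i hi ↦ ?_⟩
    rcases Nat.eq_zero_or_pos i with rfl | hi₀
    · exact (card_filter_le _ _).trans (card_fin _).le
    · exact hf i hi₀ hi
  refine (Nat.cast_le.2 ((card_le_card hsub).trans (card_levelBoundedFuns_le le_rfl))).trans ?_
  push_cast
  refine prod_le_prod (fun _ _ ↦ by positivity) fun i hi ↦ ?_
  have his := (mem_Icc.1 hi).2
  exact sum_range_choose_le_exp_mul_div_pow (hpos i his) (hmono _ _ (Nat.sub_le i 1) his)

/-- Combinatorial lemma: if `l 0 ≥ l 1 ≥ … ≥ l s` are positive integers, the number of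
functions `f : {1,…,l 0} → {0,1,…,s}` such that `#{r : f r ≥ i} ≤ l i` for all `1 ≤ i ≤ s`
is at most `∏_{i=1}^s (e l_{i-1}/l_i)^{l_i}`. -/
theorem stmt0 (s : ℕ) (hs : 1 ≤ s) (l : ℕ → ℕ) (hpos : ∀ i ≤ s, 0 < l i)
    (hmono : ∀ i j, i ≤ j → j ≤ s → l j ≤ l i) :
    ((Finset.univ.filter (fun f : Fin (l 0) → Fin (s + 1) =>
        ∀ i : ℕ, 1 ≤ i → i ≤ s →
          ((Finset.univ.filter (fun r : Fin (l 0) => i ≤ (f r : ℕ))).card ≤ l i))).card : ℝ)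
      ≤ ∏ i ∈ Finset.Icc 1 s, (Real.exp 1 * l (i - 1) / l i) ^ (l i) :=
  stmt0_general s l hpos hmono
end

section
/- Let $X_1,\dots,X_n$ be random variables such that for every subset $\{i_1 < \cdots < i_k\} \subseteq \{1,\dots,n\}$ and every $t > 0$, $\mathbb{P}(|X_{i_1}| \geq t, \dots, |X_{i_k}| \geq t) \leq 2^k \exp(-kt/C_0)$. Then $\mathbb{P}(X_k^* \geq t) \leq (2en/k)^k \exp(-kt/C_0)$, where $X_k^*$ denotes the $k$-th largest value among $|X_1|, \dots, |X_n|$. In particular, $\mathbb{P}(X_k^* \geq t) \leq \exp(-kt/(2C_0))$ whenever $t \geq 2C_0(1 + \log(2en/k))$. -/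
/-!
If the `k`-th largest of the `|X i|` is at least `t`, then `|X i| ≥ t` on some `k`-element set of
indices, so a union bound over the `n.choose k ≤ (e n / k) ^ k` such sets gives the first estimate.
For `t ≥ 2 C₀ (1 + log (2 e n / k))` the factor `(2 e n / k) ^ k` is at most `exp (k t / (2 C₀))`,
which absorbs half of the exponential decay.
-/

open MeasureTheory Finset

/-- `orderStat x k` is the `k`-th largest among `|x 1|, …, |x n|` (the `k`-th order
statistic of `(|x 1|, …, |x n|)` in nonincreasing order, 1-indexed). -/
noncomputable def orderStat {n : ℕ} (x : Fin n → ℝ) (k : ℕ) : ℝ :=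
  ((Finset.univ.val.map fun i : Fin n => |x i|).sort (· ≤ ·)).getD (n - k) 0

theorem List.le_countP_of_le_getElem_sub {α : Type*} [LinearOrder α] {l : List α}
    (hl : l.Pairwise (· ≤ ·)) {k : ℕ} (hk : 0 < k) (hkl : k ≤ l.length) {t : α}
    (ht : t ≤ l[l.length - k]) : k ≤ l.countP (fun a => t ≤ a) := by
  have hdrop : ∀ a ∈ l.drop (l.length - k), t ≤ a := by
    intro a ha
    obtain ⟨i, hi, rfl⟩ := List.mem_iff_getElem.mp ha
    rw [List.getElem_drop]
    exact ht.trans (hl.rel_get_of_le (a := ⟨_, by omega⟩) (b := ⟨_, by rw [List.length_drop] at hi; omega⟩)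
      (by simp))
  calc k = (l.drop (l.length - k)).length := by rw [List.length_drop]; omega
    _ = (l.drop (l.length - k)).countP (fun a => t ≤ a) :=
      ((List.countP_eq_length).mpr (by simpa using hdrop)).symm
    _ ≤ l.countP (fun a => t ≤ a) := (List.drop_sublist _ _).countP_le

theorem le_card_filter_le_abs_of_le_orderStat {n : ℕ} (x : Fin n → ℝ) {k : ℕ} (hkn : k ≤ n)
    {t : ℝ} (ht : t ≤ orderStat x k) : k ≤ #{i | t ≤ |x i|} := by
  rcases Nat.eq_zero_or_pos k with rfl | hk
  · exact Nat.zero_le _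
  unfold orderStat at ht
  set M : Multiset ℝ := univ.val.map fun i : Fin n => |x i|
  have hlen : (M.sort (· ≤ ·)).length = n := by simp [M]
  have hcount : M.countP (fun a => t ≤ a) = #{i | t ≤ |x i|} := by
    rw [Multiset.countP_map, Finset.card_def, Finset.filter_val]
  rw [← hcount, ← Multiset.sort_eq M (· ≤ ·), Multiset.coe_countP]
  rw [List.getD_eq_getElem _ _ (by omega)] at ht
  refine List.le_countP_of_le_getElem_sub (Multiset.pairwise_sort _ _) hk (by omega) ?_
  simpa [hlen] using ht

theorem Nat.choose_le_exp_one_mul_div_pow (n k : ℕ) :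
    (n.choose k : ℝ) ≤ (Real.exp 1 * n / k) ^ k := by
  rcases Nat.eq_zero_or_pos k with rfl | hk
  · simp
  calc (n.choose k : ℝ) ≤ (n : ℝ) ^ k / k.factorial := Nat.choose_le_pow_div k n
    _ = ((n : ℝ) / k) ^ k * ((k : ℝ) ^ k / k.factorial) := by
        rw [div_pow]; field_simp
    _ ≤ ((n : ℝ) / k) ^ k * Real.exp k := by
        gcongr; exact Real.pow_div_factorial_le_exp _ (by positivity) k
    _ = (Real.exp 1 * n / k) ^ k := by
        rw [← Real.exp_one_pow, ← mul_pow]; ring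

theorem MeasureTheory.measure_le_card_filter_le_choose_mul {Ω ι : Type*} [MeasurableSpace Ω]
    [Fintype ι] (μ : Measure Ω) (p : Ω → ι → Prop) [∀ ω, DecidablePred (p ω)] (k : ℕ)
    {B : ENNReal} (hB : ∀ S : Finset ι, #S = k → μ {ω | ∀ i ∈ S, p ω i} ≤ B) :
    μ {ω | k ≤ #{i | p ω i}} ≤ (Fintype.card ι).choose k * B := by
  calc μ {ω | k ≤ #{i | p ω i}}
      ≤ μ (⋃ S ∈ powersetCard k (univ : Finset ι), {ω | ∀ i ∈ S, p ω i}) := by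
        refine measure_mono fun ω hω => ?_
        obtain ⟨S, hS, hScard⟩ := exists_subset_card_eq (s := {i | p ω i}) hω
        exact Set.mem_biUnion (mem_powersetCard.mpr ⟨subset_univ _, hScard⟩)
          fun i hi => (mem_filter.mp (hS hi)).2
    _ ≤ ∑ S ∈ powersetCard k (univ : Finset ι), μ {ω | ∀ i ∈ S, p ω i} :=
        measure_biUnion_finset_le _ _
    _ ≤ ∑ S ∈ powersetCard k (univ : Finset ι), B :=
        sum_le_sum fun S hS => hB S (mem_powersetCard.mp hS).2
    _ = (Fintype.card ι).choose k * B := by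
        rw [sum_const, card_powersetCard, card_univ, nsmul_eq_mul]

theorem measure_le_orderStat_le_choose_mul {Ω : Type*} [MeasurableSpace Ω] (μ : Measure Ω)
    {n : ℕ} (X : Ω → Fin n → ℝ) {k : ℕ} (hkn : k ≤ n) (t : ℝ) {B : ENNReal}
    (hB : ∀ S : Finset (Fin n), #S = k → μ {ω | ∀ i ∈ S, t ≤ |X ω i|} ≤ B) :
    μ {ω | t ≤ orderStat (X ω) k} ≤ n.choose k * B :=
  calc μ {ω | t ≤ orderStat (X ω) k} ≤ μ {ω | k ≤ #{i | t ≤ |X ω i|}} :=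
        measure_mono fun ω => le_card_filter_le_abs_of_le_orderStat (X ω) hkn
    _ ≤ n.choose k * B := by simpa using measure_le_card_filter_le_choose_mul μ _ k hB

theorem choose_mul_two_pow_le (n k : ℕ) {c : ℝ} (hc : 0 ≤ c) :
    n.choose k * (2 ^ k * c) ≤ (2 * Real.exp 1 * n / k) ^ k * c := by
  rw [show 2 * Real.exp 1 * n / k = 2 * (Real.exp 1 * n / k) by ring, mul_pow, mul_left_comm,
    ← mul_assoc]
  gcongr
  exact Nat.choose_le_exp_one_mul_div_pow n k

theorem pow_mul_exp_le_exp_half {a c t : ℝ} (k : ℕ) (ha : 0 ≤ a) (hc : 0 < c)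
    (ht : 2 * c * Real.log a ≤ t) :
    a ^ k * Real.exp (-k * t / c) ≤ Real.exp (-k * t / (2 * c)) := by
  have ha_le : a ≤ Real.exp (t / (2 * c)) :=
    (Real.le_exp_log a).trans (Real.exp_le_exp.mpr ((le_div_iff₀ (by positivity)).mpr
      (by linarith)))
  calc a ^ k * Real.exp (-k * t / c) ≤ Real.exp (t / (2 * c)) ^ k * Real.exp (-k * t / c) := by
        gcongr
    _ = Real.exp (-k * t / (2 * c)) := by
        rw [← Real.exp_nat_mul, ← Real.exp_add]
        congr 1
        field_simp
        ring

theorem stmt5_general {Ω : Type*} [MeasurableSpace Ω] (μ : Measure Ω)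
    {n : ℕ} (X : Ω → Fin n → ℝ)
    (C0 : ℝ) (hC0 : 1 ≤ C0) (k : ℕ) (hk : 1 ≤ k) (hkn : k ≤ n)
    (hjoint : ∀ S : Finset (Fin n), S.card = k → ∀ t : ℝ, 0 < t →
      μ {ω | ∀ i ∈ S, t ≤ |X ω i|}
        ≤ ENNReal.ofReal (2 ^ k * Real.exp (-(k : ℝ) * t / C0))) :
    (∀ t : ℝ, 0 < t →
      μ {ω | t ≤ orderStat (X ω) k}
        ≤ ENNReal.ofReal ((2 * Real.exp 1 * n / k) ^ k * Real.exp (-(k : ℝ) * t / C0))) ∧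
    (∀ t : ℝ, 2 * C0 * (1 + Real.log (2 * Real.exp 1 * n / k)) ≤ t →
      μ {ω | t ≤ orderStat (X ω) k}
        ≤ ENNReal.ofReal (Real.exp (-(k : ℝ) * t / (2 * C0)))) := by
  have tail_bound : ∀ t : ℝ, 0 < t →
      μ {ω | t ≤ orderStat (X ω) k}
        ≤ ENNReal.ofReal ((2 * Real.exp 1 * n / k) ^ k * Real.exp (-(k : ℝ) * t / C0)) := by
    intro t ht
    calc μ {ω | t ≤ orderStat (X ω) k}
        ≤ n.choose k * ENNReal.ofReal (2 ^ k * Real.exp (-(k : ℝ) * t / C0)) :=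
          measure_le_orderStat_le_choose_mul μ X hkn t fun S hS => hjoint S hS t ht
      _ = ENNReal.ofReal (n.choose k * (2 ^ k * Real.exp (-(k : ℝ) * t / C0))) := by
          rw [← ENNReal.ofReal_natCast, ← ENNReal.ofReal_mul (by positivity)]
      _ ≤ _ := ENNReal.ofReal_le_ofReal (choose_mul_two_pow_le n k (Real.exp_pos _).le)
  refine ⟨tail_bound, fun t ht => ?_⟩
  have hlog : 0 ≤ Real.log (2 * Real.exp 1 * n / k) := by
    have hk' : (1 : ℝ) ≤ k := by exact_mod_cast hk
    have hkn' : (k : ℝ) ≤ n := by exact_mod_cast hkn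
    refine Real.log_nonneg ((one_le_div (by positivity)).mpr ?_)
    nlinarith [Real.add_one_le_exp 1]
  refine (tail_bound t (by nlinarith)).trans (ENNReal.ofReal_le_ofReal ?_)
  exact pow_mul_exp_le_exp_half k (by positivity) (by linarith) (by nlinarith)

/-- If joint tails satisfy `P(|X_{i₁}| ≥ t, …, |X_{i_k}| ≥ t) ≤ 2^k exp(-kt/C₀)` for
every `k`-element subset, then `P(X_k^* ≥ t) ≤ (2en/k)^k exp(-kt/C₀)`; in particular
`P(X_k^* ≥ t) ≤ exp(-kt/(2C₀))` for `t ≥ 2C₀(1 + log(2en/k))`. -/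
theorem stmt5 {Ω : Type*} [MeasurableSpace Ω] (μ : Measure Ω) [IsProbabilityMeasure μ]
    {n : ℕ} (X : Ω → Fin n → ℝ) (hX : Measurable X)
    (C0 : ℝ) (hC0 : 1 ≤ C0) (k : ℕ) (hk : 1 ≤ k) (hkn : k ≤ n)
    (hjoint : ∀ S : Finset (Fin n), S.card = k → ∀ t : ℝ, 0 < t →
      μ {ω | ∀ i ∈ S, t ≤ |X ω i|}
        ≤ ENNReal.ofReal (2 ^ k * Real.exp (-(k : ℝ) * t / C0))) :
    (∀ t : ℝ, 0 < t →
      μ {ω | t ≤ orderStat (X ω) k}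
        ≤ ENNReal.ofReal ((2 * Real.exp 1 * n / k) ^ k * Real.exp (-(k : ℝ) * t / C0))) ∧
    (∀ t : ℝ, 2 * C0 * (1 + Real.log (2 * Real.exp 1 * n / k)) ≤ t →
      μ {ω | t ≤ orderStat (X ω) k}
        ≤ ENNReal.ofReal (Real.exp (-(k : ℝ) * t / (2 * C0)))) :=
  stmt5_general μ X C0 hC0 k hk hkn hjoint
end

section
/- For any $n \geq 1$ and $r > 2$, $\sum_{k=0}^{\lfloor \log_2 n \rfloor} 2^k \log^r(en 2^{-k}) \leq (Cr)^r n$ for a universal constant $C$. -/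
/-!
Put `m = ⌊log₂ n⌋` and `j = m + 1 - k`. Since `2^m ≤ n < 2^(m+1)`, the `k`-th term is at
most `2 n 2^(-j) (2j)^r`, so the sum is at most `2^(r+1) n ∑_j j^r 2^(-j)`. Writing
`j^r ≤ (r/(e a))^r e^(a j)` (the maximum of `t ↦ t^r e^(-a t)`) with `a = log (3/2)` bounds
that series by `(r/(e a))^r ∑_j (3/4)^j`, which is `(O(r))^r`.
-/

open Real Finset

theorem rpow_le_mul_exp_mul {x a r : ℝ} (hx : 0 ≤ x) (ha : 0 < a) (hr : 0 < r) :
    x ^ r ≤ (r / (a * exp 1)) ^ r * exp (a * x) := by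
  set y := a * x / r with hy_def
  have hy : y ≤ exp (y - 1) := by linarith [add_one_le_exp (y - 1)]
  calc x ^ r = (r / a) ^ r * y ^ r := by
        rw [← mul_rpow (by positivity) (by positivity), hy_def]
        field_simp
    _ ≤ (r / a) ^ r * exp (y - 1) ^ r := by gcongr
    _ = (r / (a * exp 1)) ^ r * exp (a * x) := by
        rw [← exp_mul, div_mul_eq_div_div, div_rpow (by positivity) (exp_pos 1).le, exp_one_rpow,
          div_eq_mul_inv _ (exp r), ← exp_neg, mul_assoc, ← exp_add]
        congr 2
        rw [hy_def]
        field_simp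
        ring

theorem sum_range_rpow_div_two_pow_le {r : ℝ} (hr : 1 ≤ r) (N : ℕ) :
    ∑ j ∈ range N, (j : ℝ) ^ r / 2 ^ j ≤ (5 * r) ^ r := by
  set a := log (3 / 2)
  have ha : 1 / 3 ≤ a := by
    have := one_sub_inv_le_log_of_pos (x := 3 / 2) (by norm_num)
    norm_num at this ⊢
    linarith
  set M := (r / (a * exp 1)) ^ r
  have hterm (j : ℕ) : (j : ℝ) ^ r / 2 ^ j ≤ M * (3 / 4) ^ j := by
    have h := rpow_le_mul_exp_mul (Nat.cast_nonneg j) (by linarith : 0 < a) (by linarith : 0 < r)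
    rw [mul_comm a (j : ℝ), exp_nat_mul, exp_log (by norm_num)] at h
    rw [div_le_iff₀ (by positivity), mul_assoc, ← mul_pow]
    norm_num
    exact h
  have hgeom : ∑ j ∈ range N, (3 / 4 : ℝ) ^ j ≤ 4 := by
    have := geom_sum_Ico_le_of_lt_one (m := 0) (n := N) (x := (3 / 4 : ℝ)) (by norm_num)
      (by norm_num)
    norm_num at this
    simpa using this
  have hconst : 4 ≤ (5 * a * exp 1) ^ r := by
    have h : 4 ≤ 5 * a * exp 1 := by nlinarith [exp_one_gt_d9]
    exact h.trans (self_le_rpow_of_one_le (by linarith) hr)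
  calc ∑ j ∈ range N, (j : ℝ) ^ r / 2 ^ j ≤ ∑ j ∈ range N, M * (3 / 4) ^ j :=
        sum_le_sum fun j _ => hterm j
    _ = M * ∑ j ∈ range N, (3 / 4 : ℝ) ^ j := (mul_sum ..).symm
    _ ≤ (5 * a * exp 1) ^ r * M := by
        rw [mul_comm]; gcongr
        exact hgeom.trans hconst
    _ = (5 * r) ^ r := by
        rw [← mul_rpow (by positivity) (by positivity)]
        congr 1
        field_simp

theorem log_exp_one_mul_div_two_pow_le {x : ℝ} {k j : ℕ} (hj : 1 ≤ j) (hx : 0 < x)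
    (hxk : x < 2 ^ (k + j)) : log (exp 1 * x / 2 ^ k) ≤ 2 * j := by
  have hlogx : log x < (k + j) * log 2 := by
    simpa [log_pow] using log_lt_log hx hxk
  have hlog2 : log 2 < 1 := by linarith [log_two_lt_d9]
  have hj' : (1 : ℝ) ≤ j := by exact_mod_cast hj
  rw [log_div (by positivity) (by positivity), log_mul (exp_pos 1).ne' hx.ne', log_exp, log_pow]
  nlinarith

theorem two_pow_mul_log_rpow_le {x r : ℝ} {k j : ℕ} (hr : 0 ≤ r) (hj : 1 ≤ j)
    (hlo : 2 ^ (k + j) ≤ 2 * x) (hhi : x < 2 ^ (k + j)) :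
    2 ^ k * log (exp 1 * x / 2 ^ k) ^ r ≤ 2 * 2 ^ r * x * ((j : ℝ) ^ r / 2 ^ j) := by
  rw [pow_add] at hlo
  have h2j : (2 : ℝ) ≤ 2 ^ j := le_self_pow₀ one_le_two (by omega)
  have hkx : 2 ^ k ≤ x := by nlinarith [pow_pos (two_pos (α := ℝ)) k]
  have hx : 0 < x := lt_of_lt_of_le (by positivity) hkx
  have hlog : 0 ≤ log (exp 1 * x / 2 ^ k) := by
    apply log_nonneg
    rw [le_div_iff₀ (by positivity)]
    nlinarith [add_one_le_exp 1]
  calc 2 ^ k * log (exp 1 * x / 2 ^ k) ^ r ≤ (2 * x / 2 ^ j) * (2 * j) ^ r := by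
        gcongr
        · rwa [le_div_iff₀ (by positivity)]
        · exact log_exp_one_mul_div_two_pow_le hj hx hhi
    _ = 2 * 2 ^ r * x * ((j : ℝ) ^ r / 2 ^ j) := by
        rw [mul_rpow zero_le_two (Nat.cast_nonneg j)]
        ring

/-- For `n ≥ 1` and `r > 2`, `∑_{k=0}^{⌊log₂ n⌋} 2^k log^r(e n 2^{-k}) ≤ (Cr)^r n`
for a universal constant `C`. -/
theorem stmt6 : ∃ C : ℝ, 0 < C ∧ ∀ n : ℕ, 1 ≤ n → ∀ r : ℝ, 2 < r →
    ∑ k ∈ Finset.range (Nat.log 2 n + 1),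
        (2 : ℝ) ^ k * (Real.log (Real.exp 1 * n / 2 ^ k)) ^ r
      ≤ (C * r) ^ r * n := by
  refine ⟨20, by norm_num, fun n hn r hr => ?_⟩
  set m := Nat.log 2 n
  set g : ℕ → ℝ := fun j => (j : ℝ) ^ r / 2 ^ j
  have hlo : (2 : ℝ) ^ (m + 1) ≤ 2 * n := by
    rw [pow_succ, mul_comm]
    exact_mod_cast Nat.mul_le_mul_left 2 (Nat.pow_log_le_self 2 (by omega))
  have hhi : (n : ℝ) < 2 ^ (m + 1) := by exact_mod_cast Nat.lt_pow_succ_log_self one_lt_two n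
  have hreflect : ∑ k ∈ range (m + 1), g (m + 1 - k) ≤ ∑ j ∈ range (m + 2), g j := by
    rw [← sum_range_reflect g, sum_range_succ _ (m + 1)]
    apply le_add_of_le_of_nonneg
    · exact (sum_congr rfl fun k _ => by congr 1).le
    · positivity
  have hconst : 2 * 2 ^ r * (5 * r) ^ r ≤ (20 * r) ^ r := by
    rw [show (20 : ℝ) * r = 2 * (2 * (5 * r)) by ring, mul_rpow zero_le_two (by positivity),
      mul_rpow zero_le_two (by positivity), ← mul_assoc]
    gcongr
    exact self_le_rpow_of_one_le one_le_two (by linarith)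
  calc ∑ k ∈ range (m + 1), (2 : ℝ) ^ k * log (exp 1 * n / 2 ^ k) ^ r
      ≤ ∑ k ∈ range (m + 1), 2 * 2 ^ r * n * g (m + 1 - k) := by
        refine sum_le_sum fun k hk => ?_
        have hkj : k + (m + 1 - k) = m + 1 := by grind
        exact two_pow_mul_log_rpow_le (by linarith) (by grind) (by rwa [hkj]) (by rwa [hkj])
    _ = 2 * 2 ^ r * n * ∑ k ∈ range (m + 1), g (m + 1 - k) := (mul_sum ..).symm
    _ ≤ 2 * 2 ^ r * n * (5 * r) ^ r := by
        gcongr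
        exact hreflect.trans (sum_range_rpow_div_two_pow_le (by linarith) _)
    _ ≤ (20 * r) ^ r * n := by
        rw [mul_right_comm]
        gcongr
end

section
/- Let $X$ be an $n$-dimensional random vector whose coordinates each have mean zero and variance one, and suppose $X$ satisfies the exponential concentration inequality with constant $\alpha \geq 1$: for every Borel set $A$ with $\mathbb{P}(X \in A) \geq 1/2$ and every $t > 0$, $\mathbb{P}(X \in A + \alpha t B_2^n) \geq 1 - e^{-t}$. Then for every $1 \leq k \leq n$, $\mathbb{P}(X_k^* \geq t) \leq \exp(-\sqrt{k}\, t/(3\alpha))$ for all $t \geq 8\alpha \log(en/k)$. -/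
open MeasureTheory

/-!
Chebyshev's inequality gives `P(|X_i| ≥ 2) ≤ 1/4`, so concentration around `{x | |x_i| < 2}` yields
`P(|X_i| ≥ 2 + α u) ≤ e^{-u}` for every coordinate. Summing these tails and applying Markov's
inequality to the number of large coordinates, the set `A` of points with fewer than `k/2`
coordinates of modulus at least `s ≈ 4α log(en/k)` has probability at least `1/2`. A point with `k`
coordinates of modulus at least `t ≥ 2s` exceeds any point of `A` by at least `t - s` in more than
`k/2` coordinates, so it lies at distance more than `√(k/2) (t - s) ≥ √k t / 3` from `A`, and
concentration bounds the probability of such points.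
-/

open Real Finset

lemma le_card_filter_of_le_orderStat {n k : ℕ} (x : Fin n → ℝ) (hkn : k ≤ n) {t : ℝ}
    (h : t ≤ orderStat x k) : k ≤ #{i | t ≤ |x i|} := by
  rcases Nat.eq_zero_or_pos k with rfl | hk
  · exact Nat.zero_le _
  set l := (univ.val.map fun i : Fin n => |x i|).sort (· ≤ ·) with hl
  have hlen : l.length = n := by simp [hl]
  have hsorted : l.Pairwise (· ≤ ·) := Multiset.pairwise_sort _ _
  have hnk : n - k < l.length := by omega
  have ht : t ≤ l[n - k] := by rwa [orderStat, ← hl, List.getD_eq_getElem l 0 hnk] at h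
  have htail : ∀ y ∈ l.drop (n - k), t ≤ y := by
    intro y hy
    obtain ⟨j, hj, rfl⟩ := List.getElem_of_mem hy
    rw [List.length_drop] at hj
    rw [List.getElem_drop]
    exact ht.trans (hsorted.rel_get_of_le (a := ⟨n - k, hnk⟩) (b := ⟨n - k + j, by omega⟩)
      (by simp [Fin.le_def]))
  have hcard : #{i | t ≤ |x i|} = (l.filter (t ≤ ·)).length := by
    rw [← Multiset.coe_card, ← Multiset.filter_coe, hl, Multiset.sort_eq, Multiset.filter_map,
      Multiset.card_map]
    rfl
  calc k = (l.drop (n - k)).length := by rw [List.length_drop]; omega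
    _ = ((l.drop (n - k)).filter (t ≤ ·)).length := by
        rw [List.filter_eq_self.mpr fun y hy => decide_eq_true (htail y hy)]
    _ ≤ (l.filter (t ≤ ·)).length := ((List.drop_sublist _ _).filter _).length_le
    _ = #{i | t ≤ |x i|} := hcard.symm

lemma mul_measureReal_le_card_filter_mem_le_sum {Ω ι : Type*} [MeasurableSpace Ω]
    {μ : Measure Ω} [IsFiniteMeasure μ] [Fintype ι] {E : ι → Set Ω}
    [∀ i, DecidablePred (· ∈ E i)] (hE : ∀ i, MeasurableSet (E i)) (c : ℝ) :
    c * μ.real {ω | c ≤ #{i | ω ∈ E i}} ≤ ∑ i, μ.real (E i) := by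
  have hcount : (fun ω => (#{i | ω ∈ E i} : ℝ)) = fun ω => ∑ i, (E i).indicator 1 ω := by
    ext ω
    simp only [natCast_card_filter, Set.indicator_apply, Pi.one_apply]
  have hint : ∀ i ∈ univ, Integrable ((E i).indicator 1) μ :=
    fun i _ => (integrable_const (1 : ℝ)).indicator (hE i)
  calc c * μ.real {ω | c ≤ #{i | ω ∈ E i}}
      ≤ ∫ ω, (#{i | ω ∈ E i} : ℝ) ∂μ := by
        refine mul_meas_ge_le_integral_of_nonneg (ae_of_all _ fun _ => by positivity) ?_ c
        rw [hcount]
        exact integrable_finsetSum _ hint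
    _ = ∑ i, μ.real (E i) := by
        rw [hcount, integral_finsetSum _ hint]
        exact sum_congr rfl fun i _ => integral_indicator_one (hE i)

section LargeCoords

variable {ι : Type*} [Fintype ι]

noncomputable def largeCoords (x : EuclideanSpace ℝ ι) (s : ℝ) : Finset ι := {i | s ≤ |x i|}

lemma measurable_card_largeCoords (s : ℝ) :
    Measurable fun x : EuclideanSpace ℝ ι => (#(largeCoords x s) : ℝ) := by
  simp only [largeCoords, natCast_card_filter]
  exact Finset.measurable_sum _ fun i _ =>
    Measurable.ite (measurableSet_le measurable_const (by fun_prop)) measurable_const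
      measurable_const

lemma largeCoords_subset_union [DecidableEq ι] (x a : EuclideanSpace ℝ ι) (s t : ℝ) :
    largeCoords x t ⊆ largeCoords a s ∪ largeCoords (x - a) (t - s) := by
  intro i hi
  simp only [largeCoords, mem_union, mem_filter_univ] at hi ⊢
  by_contra! h
  rw [PiLp.sub_apply] at h
  linarith [abs_sub_abs_le_abs_sub (x i) (a i)]

lemma card_largeCoords_mul_sq_le (y : EuclideanSpace ℝ ι) {r : ℝ} (hr : 0 ≤ r) :
    #(largeCoords y r) * r ^ 2 ≤ ‖y‖ ^ 2 := by
  rw [EuclideanSpace.real_norm_sq_eq]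
  calc (#(largeCoords y r) : ℝ) * r ^ 2 = ∑ _i ∈ largeCoords y r, r ^ 2 := by simp
    _ ≤ ∑ i ∈ largeCoords y r, y i ^ 2 := sum_le_sum fun i hi => by
        rw [← sq_abs (y i)]
        exact pow_le_pow_left₀ hr (mem_filter.1 hi).2 2
    _ ≤ ∑ i, y i ^ 2 :=
        sum_le_sum_of_subset_of_nonneg (subset_univ _) fun _ _ _ => sq_nonneg _

lemma sqrt_half_mul_sub_lt_norm_sub {x a : EuclideanSpace ℝ ι} {c s t : ℝ} (hst : s < t)
    (hx : c ≤ #(largeCoords x t)) (ha : #(largeCoords a s) < c / 2) :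
    √(c / 2) * (t - s) < ‖x - a‖ := by
  classical
  have hc : 0 < c / 2 := (Nat.cast_nonneg _).trans_lt ha
  have hcard : c / 2 < #(largeCoords (x - a) (t - s)) := by
    have : (#(largeCoords x t) : ℝ) ≤ #(largeCoords a s) + #(largeCoords (x - a) (t - s)) := by
      exact_mod_cast (card_le_card (largeCoords_subset_union x a s t)).trans (card_union_le _ _)
    linarith
  have hsq := card_largeCoords_mul_sq_le (x - a) (sub_nonneg.2 hst.le)
  rw [← pow_lt_pow_iff_left₀ (by positivity) (norm_nonneg _) two_ne_zero, mul_pow,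
    sq_sqrt hc.le]
  nlinarith [mul_lt_mul_of_pos_right hcard (pow_pos (sub_pos.2 hst) 2)]

end LargeCoords

section Concentration

variable {Ω E : Type*} [MeasurableSpace Ω] [SeminormedAddCommGroup E] [MeasurableSpace E]

def HasExpConcentration (μ : Measure Ω) (X : Ω → E) (α : ℝ) : Prop :=
  ∀ A : Set E, MeasurableSet A → (1 : ℝ) / 2 ≤ (μ (X ⁻¹' A)).toReal → ∀ t : ℝ, 0 < t →
    1 - exp (-t) ≤ (μ (X ⁻¹' {x | ∃ a ∈ A, ‖x - a‖ ≤ α * t})).toReal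

variable {μ : Measure Ω} [IsProbabilityMeasure μ] {X : Ω → E} {α : ℝ}

lemma HasExpConcentration.measureReal_preimage_le_exp (h : HasExpConcentration μ X α)
    (hX : Measurable X) {A B : Set E} (hA : MeasurableSet A) (hAμ : 1 / 2 ≤ μ.real (X ⁻¹' A))
    (hB : MeasurableSet B) {u : ℝ} (hu : 0 < u) (hAB : ∀ x ∈ B, ∀ a ∈ A, α * u < ‖x - a‖) :
    μ.real (X ⁻¹' B) ≤ exp (-u) := by
  have hsub : X ⁻¹' {x | ∃ a ∈ A, ‖x - a‖ ≤ α * u} ⊆ (X ⁻¹' B)ᶜ := by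
    rintro ω ⟨a, ha, hxa⟩ hω
    exact (hAB _ hω a ha).not_ge hxa
  have hconc := h A hA hAμ u hu
  have hmono := measureReal_mono (μ := μ) hsub
  rw [← measureReal_def] at hconc
  rw [probReal_compl_eq_one_sub (hB.preimage hX)] at hmono
  linarith

end Concentration

namespace HasExpConcentration

variable {Ω ι : Type*} [MeasurableSpace Ω] [Fintype ι] {μ : Measure Ω} [IsProbabilityMeasure μ]
  {X : Ω → EuclideanSpace ℝ ι} {α : ℝ}

lemma measureReal_abs_apply_ge_le_exp (h : HasExpConcentration μ X α) (hX : Measurable X) (i : ι)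
    (hvar : ∫ ω, X ω i ^ 2 ∂μ = 1) {u : ℝ} (hu : 0 < u) :
    μ.real {ω | 2 + α * u ≤ |X ω i|} ≤ exp (-u) := by
  have hXi : Measurable fun ω => X ω i := by fun_prop
  have hcheb : μ.real {ω | 2 ≤ |X ω i|} ≤ 1 / 4 := by
    have hmarkov := mul_meas_ge_le_integral_of_nonneg (ae_of_all μ fun ω => sq_nonneg (X ω i))
      (Integrable.of_integral_ne_zero (by rw [hvar]; exact one_ne_zero)) 4
    have hsub : {ω | 2 ≤ |X ω i|} ⊆ {ω | 4 ≤ X ω i ^ 2} := fun ω (hω : 2 ≤ |X ω i|) =>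
      show 4 ≤ X ω i ^ 2 by nlinarith [sq_abs (X ω i)]
    linarith [measureReal_mono (μ := μ) hsub]
  have hA : 1 / 2 ≤ μ.real (X ⁻¹' {x | |x i| < 2}) := by
    have hcompl : X ⁻¹' {x | |x i| < 2} = {ω | 2 ≤ |X ω i|}ᶜ := by ext; simp
    rw [hcompl, probReal_compl_eq_one_sub (measurableSet_le measurable_const hXi.abs)]
    linarith
  refine h.measureReal_preimage_le_exp (B := {x | 2 + α * u ≤ |x i|}) hX
    (measurableSet_lt (by fun_prop) measurable_const) hA
    (measurableSet_le measurable_const (by fun_prop)) hu fun x hx a ha => ?_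
  have hcoord := PiLp.norm_apply_le (x - a) i
  simp only [Set.mem_ofPred_eq, PiLp.sub_apply, Real.norm_eq_abs] at hx ha hcoord
  linarith [abs_sub_abs_le_abs_sub (x i) (a i)]

lemma half_le_measureReal_card_largeCoords_lt (h : HasExpConcentration μ X α) (hX : Measurable X)
    (hvar : ∀ i, ∫ ω, X ω i ^ 2 ∂μ = 1) {u : ℝ} (hu : 0 < u) {c : ℝ} (hc : 0 < c)
    (hcu : Fintype.card ι * exp (-u) ≤ c / 4) :
    1 / 2 ≤ μ.real (X ⁻¹' {x | (#(largeCoords x (2 + α * u)) : ℝ) < c / 2}) := by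
  have hmarkov : c / 2 * μ.real (X ⁻¹' {x | c / 2 ≤ (#(largeCoords x (2 + α * u)) : ℝ)})
      ≤ ∑ i, μ.real {ω | 2 + α * u ≤ |X ω i|} := mul_measureReal_le_card_filter_mem_le_sum
    (E := fun i => {ω | 2 + α * u ≤ |X ω i|})
    (fun i => measurableSet_le measurable_const (by fun_prop)) (c / 2)
  have htails : ∑ i, μ.real {ω | 2 + α * u ≤ |X ω i|} ≤ Fintype.card ι * exp (-u) :=
    calc ∑ i, μ.real {ω | 2 + α * u ≤ |X ω i|} ≤ ∑ _i : ι, exp (-u) :=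
          sum_le_sum fun i _ => h.measureReal_abs_apply_ge_le_exp hX i (hvar i) hu
      _ = Fintype.card ι * exp (-u) := by simp
  have hbad : μ.real (X ⁻¹' {x | c / 2 ≤ (#(largeCoords x (2 + α * u)) : ℝ)}) ≤ 1 / 2 := by
    nlinarith
  have hcompl : X ⁻¹' {x | (#(largeCoords x (2 + α * u)) : ℝ) < c / 2}
      = (X ⁻¹' {x | c / 2 ≤ (#(largeCoords x (2 + α * u)) : ℝ)})ᶜ := by
    ext
    simp
  rw [hcompl, probReal_compl_eq_one_sub
    ((measurableSet_le measurable_const (measurable_card_largeCoords _)).preimage hX)]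
  linarith

lemma measureReal_card_largeCoords_ge_le_exp (h : HasExpConcentration μ X α) (hX : Measurable X)
    (hα : 0 < α) {c s t : ℝ} (hc : 0 < c) (hst : s < t)
    (hA : 1 / 2 ≤ μ.real (X ⁻¹' {x | (#(largeCoords x s) : ℝ) < c / 2})) :
    μ.real (X ⁻¹' {x | c ≤ #(largeCoords x t)}) ≤ exp (-(√(c / 2) * (t - s) / α)) := by
  refine h.measureReal_preimage_le_exp hX
    (measurableSet_lt (measurable_card_largeCoords s) measurable_const) hA
    (measurableSet_le measurable_const (measurable_card_largeCoords t))
    (div_pos (mul_pos (sqrt_pos.2 (half_pos hc)) (sub_pos.2 hst)) hα) fun x hx a ha => ?_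
  rw [mul_div_cancel₀ _ hα.ne']
  exact sqrt_half_mul_sub_lt_norm_sub hst hx ha

end HasExpConcentration

lemma mul_exp_two_sub_four_log_le {k n : ℝ} (hk : 0 < k) (hkn : k ≤ n) :
    n * exp (2 - 4 * log (exp 1 * n / k)) ≤ k / 4 := by
  have hn : 0 < n := hk.trans_le hkn
  have he : 4 ≤ exp 1 ^ 2 := by nlinarith [add_one_le_exp 1]
  have hpow : 4 * log (exp 1 * n / k) = log ((exp 1 * n / k) ^ 4) := by
    rw [log_pow]; norm_num
  have hsq : exp 2 = exp 1 ^ 2 := by rw [← exp_nat_mul]; norm_num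
  rw [exp_sub, hpow, exp_log (by positivity), hsq]
  field_simp
  nlinarith [pow_le_pow_left₀ hk.le hkn 3, pow_pos hk 3, pow_pos hn 3]

lemma sqrt_mul_div_three_le_sqrt_half_mul {c s t : ℝ} (ht : 0 ≤ t)
    (hst : 2 * s ≤ t) : √c * t / 3 ≤ √(c / 2) * (t - s) := by
  have h2 : √2 * 2 ≤ 3 := by nlinarith [sq_sqrt (zero_le_two : (0 : ℝ) ≤ 2), sqrt_nonneg 2]
  rw [sqrt_div' c zero_le_two]
  calc √c * t / 3 ≤ √c * t / (√2 * 2) := by gcongr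
    _ = √c / √2 * (t / 2) := by ring
    _ ≤ √c / √2 * (t - s) := by gcongr; linarith

theorem stmt11_general {Ω : Type*} [MeasurableSpace Ω] (μ : Measure Ω) [IsProbabilityMeasure μ]
    {n : ℕ} (X : Ω → EuclideanSpace ℝ (Fin n)) (hX : Measurable X)
    (hvar : ∀ i : Fin n, ∫ ω, (X ω i) ^ 2 ∂μ = 1)
    (α : ℝ) (hα : 1 ≤ α)
    (hconc : ∀ A : Set (EuclideanSpace ℝ (Fin n)), MeasurableSet A →
      (1 : ℝ) / 2 ≤ (μ (X ⁻¹' A)).toReal → ∀ t : ℝ, 0 < t →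
        1 - Real.exp (-t) ≤ (μ (X ⁻¹' {x | ∃ a ∈ A, ‖x - a‖ ≤ α * t})).toReal)
    (k : ℕ) (hk1 : 1 ≤ k) (hkn : k ≤ n) :
    ∀ t : ℝ, 8 * α * Real.log (Real.exp 1 * n / k) ≤ t →
      μ {ω | t ≤ orderStat (fun i => X ω i) k}
        ≤ ENNReal.ofReal (Real.exp (-(Real.sqrt k * t) / (3 * α))) := by
  intro t ht
  have hconc : HasExpConcentration μ X α := hconc
  have hk : (0 : ℝ) < k := Nat.cast_pos.2 hk1
  have hkn' : (k : ℝ) ≤ n := Nat.cast_le.2 hkn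
  have hn : (0 : ℝ) < n := hk.trans_le hkn'
  set L := log (exp 1 * n / k)
  have hL : 1 ≤ L := by
    rw [le_log_iff_exp_le (by positivity), le_div_iff₀ hk]
    nlinarith [exp_pos 1]
  -- with `u = 4L - 2` the summed coordinate tails `n e^{-u}` are at most `k/4`
  have hA := hconc.half_le_measureReal_card_largeCoords_lt hX hvar
    (u := 4 * L - 2) (by linarith) hk (by simpa using mul_exp_two_sub_four_log_le hk hkn')
  have hs : 0 < 2 + α * (4 * L - 2) := by nlinarith
  have hst : 2 * (2 + α * (4 * L - 2)) ≤ t := by nlinarith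
  have ht0 : 0 ≤ t := by linarith
  have hB := hconc.measureReal_card_largeCoords_ge_le_exp hX (by linarith) hk (t := t)
    (by linarith) hA
  calc μ {ω | t ≤ orderStat (fun i => X ω i) k}
      ≤ μ (X ⁻¹' {x | (k : ℝ) ≤ #(largeCoords x t)}) := measure_mono fun ω hω => by
        exact_mod_cast le_card_filter_of_le_orderStat _ hkn hω
    _ = ENNReal.ofReal (μ.real (X ⁻¹' {x | (k : ℝ) ≤ #(largeCoords x t)})) :=
        (ofReal_measureReal).symm
    _ ≤ ENNReal.ofReal (exp (-(√k * t) / (3 * α))) := by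
        refine ENNReal.ofReal_le_ofReal (hB.trans (exp_le_exp.2 ?_))
        rw [neg_div, neg_le_neg_iff, ← div_div]
        exact div_le_div_of_nonneg_right
          (sqrt_mul_div_three_le_sqrt_half_mul ht0 hst) (by linarith : (0 : ℝ) ≤ α)

/-- If the coordinates of `X` have mean zero and variance one and `X` satisfies
exponential concentration with constant `α ≥ 1` (w.r.t. the Euclidean norm), then
`P(X_k^* ≥ t) ≤ exp(-√k t/(3α))` for `t ≥ 8α log(en/k)`. -/
theorem stmt11 {Ω : Type*} [MeasurableSpace Ω] (μ : Measure Ω) [IsProbabilityMeasure μ]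
    {n : ℕ} (hn : 1 ≤ n) (X : Ω → EuclideanSpace ℝ (Fin n)) (hX : Measurable X)
    (hmean : ∀ i : Fin n, ∫ ω, X ω i ∂μ = 0)
    (hvar : ∀ i : Fin n, ∫ ω, (X ω i) ^ 2 ∂μ = 1)
    (α : ℝ) (hα : 1 ≤ α)
    (hconc : ∀ A : Set (EuclideanSpace ℝ (Fin n)), MeasurableSet A →
      (1 : ℝ) / 2 ≤ (μ (X ⁻¹' A)).toReal → ∀ t : ℝ, 0 < t →
        1 - Real.exp (-t) ≤ (μ (X ⁻¹' {x | ∃ a ∈ A, ‖x - a‖ ≤ α * t})).toReal)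
    (k : ℕ) (hk1 : 1 ≤ k) (hkn : k ≤ n) :
    ∀ t : ℝ, 8 * α * Real.log (Real.exp 1 * n / k) ≤ t →
      μ {ω | t ≤ orderStat (fun i => X ω i) k}
        ≤ ENNReal.ofReal (Real.exp (-(Real.sqrt k * t) / (3 * α))) :=
  stmt11_general μ X hX hvar α hα hconc k hk1 hkn
end
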